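/- arXiv:2008.13056 — 2 statements merged into one kernel-verified Lean document; each statement's English description precedes it below -/
import Mathlib

section
/- For all real numbers x, y in the interval [-C, C] with C ≥ 2, we have σ(x)(1-σ(x))(y-x)² ≤ 2C·D(σ(x)‖σ(y)), where σ(x) = e^x/(1+e^x) is the logistic function and D(p‖q) = p·log(p/q) + (1-p)·log((1-p)/(1-q)) is the Kullback-Leibler divergence between Bernoulli distributions. -/
/-!
Writing `σ` for the sigmoid and `softplus x = log (1 + exp x)`, we have `softplus' = σ` and
`D(σ x ‖ σ y) = softplus y - softplus x - σ x (y - x)`, the Bregman divergence of `softplus`.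
For fixed `y`, the function `Φ x = 2C D(σ x ‖ σ y) - σ'(x) (y - x)²` vanishes at `x = y`
and `Φ'(x) = -σ'(x) (y - x) (2(C - 1) - (2σ x - 1)(y - x))`, which is `≤ 0` for
`x ≤ y ≤ C`: `2σ x - 1` is negative for `x < 0`, and for `x ≥ 0` it is below `1` while
`y - x ≤ C ≤ 2(C - 1)`.
The case `y ≤ x` follows from `σ (-x) = 1 - σ x`.
-/

noncomputable def logistic (x : ℝ) : ℝ := Real.exp x / (1 + Real.exp x)

noncomputable def klBer (p q : ℝ) : ℝ :=
  p * Real.log (p / q) + (1 - p) * Real.log ((1 - p) / (1 - q))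

open Real Set

theorem logistic_eq_sigmoid : logistic = sigmoid := by
  funext x
  rw [logistic, sigmoid_def, exp_neg]
  field_simp
  ring

noncomputable def softplus (x : ℝ) : ℝ := log (1 + exp x)

theorem hasDerivAt_softplus (x : ℝ) : HasDerivAt softplus (sigmoid x) x := by
  rw [← logistic_eq_sigmoid]
  exact ((hasDerivAt_exp x).const_add 1).log (by positivity)

theorem log_sigmoid (x : ℝ) : log (sigmoid x) = x - softplus x := by
  rw [← logistic_eq_sigmoid, logistic, softplus, log_div (exp_pos x).ne' (by positivity), log_exp]

theorem log_one_sub_sigmoid (x : ℝ) : log (1 - sigmoid x) = -softplus x := by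
  rw [← sigmoid_neg, sigmoid_def, neg_neg, log_inv, softplus]

theorem klBer_one_sub_one_sub (p q : ℝ) : klBer (1 - p) (1 - q) = klBer p q := by
  rw [klBer, klBer, sub_sub_cancel, sub_sub_cancel]
  ring

theorem klBer_sigmoid_sigmoid (x y : ℝ) :
    klBer (sigmoid x) (sigmoid y) = softplus y - softplus x - sigmoid x * (y - x) := by
  rw [klBer, log_div (sigmoid_pos x).ne' (sigmoid_pos y).ne',
    log_div (sub_pos.2 (sigmoid_lt_one x)).ne' (sub_pos.2 (sigmoid_lt_one y)).ne',
    log_sigmoid, log_sigmoid, log_one_sub_sigmoid, log_one_sub_sigmoid]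
  ring

theorem sigmoid_mul_one_sub_mul_sq_le_klBer {C x y : ℝ} (hC : 2 ≤ C) (hxy : x ≤ y)
    (hy : y ≤ C) :
    sigmoid x * (1 - sigmoid x) * (y - x) ^ 2 ≤ 2 * C * klBer (sigmoid x) (sigmoid y) := by
  set Φ : ℝ → ℝ := fun s ↦ 2 * C * (softplus y - softplus s - sigmoid s * (y - s)) -
    sigmoid s * (1 - sigmoid s) * (y - s) ^ 2
  have hΦ (s : ℝ) : HasDerivAt Φ (-(sigmoid s * (1 - sigmoid s)) * (y - s) *
      (2 * (C - 1) - (2 * sigmoid s - 1) * (y - s))) s := by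
    have hσ := hasDerivAt_sigmoid s
    have hlin : HasDerivAt (fun s ↦ y - s) (-1) s := (hasDerivAt_id s).const_sub y
    refine (((((hasDerivAt_softplus s).const_sub (softplus y)).sub (hσ.fun_mul hlin)).const_mul
      (2 * C)).sub ((hσ.fun_mul (hσ.const_sub 1)).fun_mul (hlin.fun_pow 2))).congr_deriv ?_
    push_cast
    ring
  have hfactor {s : ℝ} (hs : s ≤ y) :
      (2 * sigmoid s - 1) * (y - s) ≤ 2 * (C - 1) := by
    rcases le_total s 0 with hs0 | hs0
    · have : sigmoid s ≤ 2⁻¹ := sigmoid_zero ▸ sigmoid_le hs0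
      nlinarith
    · nlinarith [sigmoid_lt_one s]
  have hanti : AntitoneOn Φ (Icc x y) := by
    refine antitoneOn_of_deriv_nonpos (convex_Icc x y) ?_ ?_ ?_
    · exact HasDerivAt.continuousOn fun s _ ↦ hΦ s
    · exact fun s _ ↦ (hΦ s).differentiableAt.differentiableWithinAt
    · intro s hs
      rw [interior_Icc] at hs
      rw [(hΦ s).deriv, neg_mul, neg_mul, neg_nonpos]
      have hσ' : 0 ≤ sigmoid s * (1 - sigmoid s) :=
        mul_nonneg (sigmoid_nonneg s) (sub_nonneg.2 (sigmoid_le_one s))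
      exact mul_nonneg (mul_nonneg hσ' (sub_nonneg.2 hs.2.le)) (sub_nonneg.2 (hfactor hs.2.le))
  have hΦy : Φ y = 0 := by simp [Φ]
  have hΦx : 0 ≤ Φ x := hΦy ▸ hanti (left_mem_Icc.2 hxy) (right_mem_Icc.2 hxy) hxy
  rw [klBer_sigmoid_sigmoid]
  exact sub_nonneg.1 hΦx

theorem stmt_0_general (C : ℝ) (hC : 2 ≤ C) (x y : ℝ)
    (hy : y ∈ Set.Icc (-C) C) :
    logistic x * (1 - logistic x) * (y - x) ^ 2 ≤ 2 * C * klBer (logistic x) (logistic y) := by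
  rw [logistic_eq_sigmoid]
  rcases le_total x y with hxy | hyx
  · exact sigmoid_mul_one_sub_mul_sq_le_klBer hC hxy hy.2
  · have h := sigmoid_mul_one_sub_mul_sq_le_klBer hC (neg_le_neg hyx) (neg_le.1 hy.1)
    rw [sigmoid_neg, sigmoid_neg, klBer_one_sub_one_sub] at h
    convert h using 1
    ring

theorem stmt_0 (C : ℝ) (hC : 2 ≤ C) (x y : ℝ)
    (hx : x ∈ Set.Icc (-C) C) (hy : y ∈ Set.Icc (-C) C) :
    logistic x * (1 - logistic x) * (y - x) ^ 2 ≤ 2 * C * klBer (logistic x) (logistic y) :=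
  stmt_0_general C hC x y hy
end

section
/- For all real numbers x, y in the interval [-C, C] with C ≥ 2 and more generally for any C > 0 setting C_m = max{C, 2}: σ(x)(1-σ(x))(y-x)² ≤ 2·C_m·D(σ(x)‖σ(y)). -/
open Real Set

theorem logistic_pos (x : ℝ) : 0 < logistic x := by unfold logistic; positivity

theorem one_sub_logistic (x : ℝ) : 1 - logistic x = (1 + exp x)⁻¹ := by
  unfold logistic; field_simp; ring

theorem logistic_neg (x : ℝ) : logistic (-x) = 1 - logistic x := by
  rw [one_sub_logistic, logistic, exp_neg]
  field_simp
  ring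

theorem log_logistic (x : ℝ) : log (logistic x) = x - log (1 + exp x) := by
  rw [logistic, log_div (exp_pos x).ne' (by positivity), log_exp]

theorem log_one_sub_logistic (x : ℝ) : log (1 - logistic x) = -log (1 + exp x) := by
  rw [one_sub_logistic, log_inv]

theorem klBer_logistic (x y : ℝ) :
    klBer (logistic x) (logistic y) =
      log (1 + exp y) - log (1 + exp x) - logistic x * (y - x) := by
  have h1 (t : ℝ) : 1 - logistic t ≠ 0 := by rw [one_sub_logistic]; positivity
  rw [klBer, log_div (logistic_pos x).ne' (logistic_pos y).ne', log_div (h1 x) (h1 y),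
    log_logistic, log_logistic, log_one_sub_logistic, log_one_sub_logistic]
  ring

theorem hasDerivAt_log_one_add_exp (x : ℝ) :
    HasDerivAt (fun t => log (1 + exp t)) (logistic x) x :=
  ((hasDerivAt_exp x).const_add 1).log (by positivity)

theorem le_of_hasDerivAt_mul_sub_nonneg {f f' : ℝ → ℝ} {s : Set ℝ} {x y : ℝ}
    (hs : s.OrdConnected) (hf : ∀ t, HasDerivAt f (f' t) t) (hx : x ∈ s) (hy : y ∈ s)
    (h : ∀ t ∈ s, 0 ≤ f' t * (t - x)) : f x ≤ f y := by
  have hdiff : Differentiable ℝ f := fun t => (hf t).differentiableAt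
  have hderiv : deriv f = f' := funext fun t => (hf t).deriv
  rcases le_total x y with hxy | hyx
  · refine monotoneOn_of_deriv_nonneg (convex_Icc x y) hdiff.continuous.continuousOn
      hdiff.differentiableOn (fun t ht => ?_) ⟨le_rfl, hxy⟩ ⟨hxy, le_rfl⟩ hxy
    rw [interior_Icc] at ht
    rw [hderiv]
    exact nonneg_of_mul_nonneg_left (h t (hs.out hx hy (Ioo_subset_Icc_self ht)))
      (sub_pos.2 ht.1)
  · refine antitoneOn_of_deriv_nonpos (convex_Icc y x) hdiff.continuous.continuousOn
      hdiff.differentiableOn (fun t ht => ?_) ⟨le_rfl, hyx⟩ ⟨hyx, le_rfl⟩ hyx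
    rw [interior_Icc] at ht
    rw [hderiv]
    exact nonpos_of_mul_nonneg_left (h t (hs.out hy hx (Ioo_subset_Icc_self ht)))
      (sub_neg.2 ht.2)

theorem mul_exp_sub_one_le {s C : ℝ} (hs : 0 ≤ s) (hsC : s ≤ C) :
    C * (exp s - 1) ≤ s * (exp C - 1) := by
  rcases hs.eq_or_lt with rfl | hs
  · simp
  have hC : 0 < C := hs.trans_le hsC
  have := convexOn_exp.2 (mem_univ C) (mem_univ 0) (div_nonneg hs.le hC.le)
    (sub_nonneg.2 ((div_le_one hC).2 hsC)) (add_sub_cancel _ _)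
  simp only [smul_eq_mul, mul_zero, add_zero, exp_zero, mul_one] at this
  field_simp at this
  linarith

theorem exp_mul_sub_mul_one_sub_exp_neg_le {C r : ℝ} (hC : 2 ≤ C) (hr : 0 ≤ r) :
    exp C * (r - C * (1 - exp (-r))) ≤ C * (exp r - 1) - r := by
  have hr1 := add_one_le_exp r
  rcases le_total r C with hrC | hCr
  · have hchord := mul_exp_sub_one_le (sub_nonneg.2 hrC) (sub_le_self C hr)
    have hw : exp C * exp (-r) = exp (C - r) := by rw [← exp_add]; ring_nf
    nlinarith [mul_nonneg (sub_nonneg.2 hC) hr, mul_nonneg (by linarith : (0 : ℝ) ≤ C)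
      (by linarith : 0 ≤ exp r - 1 - r)]
  · have hE : C + 1 ≤ exp C := by linarith [add_one_le_exp C]
    have hgrowth : exp C * (r - C + 1) ≤ exp r := by
      calc exp C * (r - C + 1) ≤ exp C * exp (r - C) :=
            mul_le_mul_of_nonneg_left (add_one_le_exp _) (exp_pos C).le
        _ = exp r := by rw [← exp_add]; ring_nf
    have hdecay : exp C * exp (-r) ≤ 1 := by
      rw [← exp_add, exp_le_one_iff]; linarith
    nlinarith [mul_nonneg (sub_nonneg.2 hCr) (sub_nonneg.2 hC)]

theorem logistic_mul_one_sub_mul_le {C x y : ℝ} (hC : 2 ≤ C) (hxy : x ≤ y) (hy : y ≤ C) :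
    logistic x * (1 - logistic x) * (y - x) ≤ C * (logistic y - logistic x) := by
  set r := y - x with hr
  have hr0 : 0 ≤ r := sub_nonneg.2 hxy
  have hA : 0 ≤ C * (exp r - 1) - r := by nlinarith [add_one_le_exp r]
  have hAk := exp_mul_sub_mul_one_sub_exp_neg_le hC hr0
  have hv : exp y ≤ exp C := exp_le_exp.2 hy
  have hvk : 0 ≤ C * (exp r - 1) - r - exp y * (r - C * (1 - exp (-r))) := by
    rcases le_total (r - C * (1 - exp (-r))) 0 with h | h
    · nlinarith [exp_pos y]
    · nlinarith [mul_le_mul_of_nonneg_right hv h]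
  have hfactor : C * (logistic y - logistic x) - logistic x * (1 - logistic x) * r =
      exp x / ((1 + exp x) ^ 2 * (1 + exp y)) *
        (C * (exp r - 1) - r - exp y * (r - C * (1 - exp (-r)))) := by
    rw [one_sub_logistic, logistic, logistic, hr, exp_neg, exp_sub]
    field_simp
    ring
  have := mul_nonneg (by positivity : 0 ≤ exp x / ((1 + exp x) ^ 2 * (1 + exp y))) hvk
  linarith

theorem logistic_mul_one_sub_mul_sq_le {C x t : ℝ} (hC : 2 ≤ C) (ht : t ∈ Icc (-C) C) :
    logistic x * (1 - logistic x) * (t - x) ^ 2 ≤ C * (logistic t - logistic x) * (t - x) := by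
  rcases le_total x t with hxt | htx
  · have := mul_le_mul_of_nonneg_right (logistic_mul_one_sub_mul_le hC hxt ht.2)
      (sub_nonneg.2 hxt)
    linarith
  · have := mul_le_mul_of_nonneg_right
      (logistic_mul_one_sub_mul_le hC (neg_le_neg htx) (neg_le.1 ht.1)) (sub_nonneg.2 htx)
    rw [logistic_neg, logistic_neg] at this
    linarith

theorem logistic_mul_one_sub_mul_sq_le_klBer {C x y : ℝ} (hC : 2 ≤ C)
    (hx : x ∈ Icc (-C) C) (hy : y ∈ Icc (-C) C) :
    logistic x * (1 - logistic x) * (y - x) ^ 2 ≤ 2 * C * klBer (logistic x) (logistic y) := by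
  set c := logistic x * (1 - logistic x)
  let F t := 2 * C * (log (1 + exp t) - log (1 + exp x) - logistic x * (t - x)) - c * (t - x) ^ 2
  have hF (t : ℝ) : HasDerivAt F (2 * C * (logistic t - logistic x) - c * (2 * (t - x))) t := by
    have hlin := ((hasDerivAt_id' t).sub_const x).const_mul (logistic x)
    have hsq := ((hasDerivAt_id' t).sub_const x).pow 2
    refine (((((hasDerivAt_log_one_add_exp t).sub_const (log (1 + exp x))).sub hlin).const_mul
      (2 * C)).sub (hsq.const_mul c)).congr_deriv ?_
    push_cast
    ring
  have := le_of_hasDerivAt_mul_sub_nonneg ordConnected_Icc hF hx hy fun t ht => by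
    linarith [logistic_mul_one_sub_mul_sq_le (x := x) hC ht]
  simp only [F, sub_self, mul_zero, zero_pow two_ne_zero] at this
  rw [klBer_logistic]
  linarith

theorem stmt_1_general (C : ℝ) (x y : ℝ)
    (hx : x ∈ Set.Icc (-C) C) (hy : y ∈ Set.Icc (-C) C) :
    logistic x * (1 - logistic x) * (y - x) ^ 2 ≤
      2 * max C 2 * klBer (logistic x) (logistic y) := by
  have hsub : Icc (-C) C ⊆ Icc (-max C 2) (max C 2) :=
    Icc_subset_Icc (neg_le_neg (le_max_left C 2)) (le_max_left C 2)
  exact logistic_mul_one_sub_mul_sq_le_klBer (le_max_right C 2) (hsub hx) (hsub hy)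

theorem stmt_1 (C : ℝ) (hC : 0 < C) (x y : ℝ)
    (hx : x ∈ Set.Icc (-C) C) (hy : y ∈ Set.Icc (-C) C) :
    logistic x * (1 - logistic x) * (y - x) ^ 2 ≤
      2 * max C 2 * klBer (logistic x) (logistic y) :=
  stmt_1_general C x y hx hy
end
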